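/- The intersection type system D satisfies subject reduction for all four rules: if Γ ⊢ t : A and t ▷ t' by β, δ, γ, or assoc, then Γ ⊢ t' : A. -/
import Mathlib


/-- Untyped λ-terms in de Bruijn representation. -/
inductive Term : Type
  | var : ℕ → Term
  | lam : Term → Term
  | app : Term → Term → Term
  deriving DecidableEq

namespace Term

/-- Shift (lift) all de Bruijn indices ≥ d by one. -/
def lift (d : ℕ) : Term → Term
  | var n => var (if n < d then n else n + 1)
  | lam t => lam (lift (d + 1) t)
  | app t u => app (lift d t) (lift d u)

/-- Capture-avoiding substitution `t[k := u]` (de Bruijn style). -/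
def subst : Term → ℕ → Term → Term
  | var n, k, u => if n = k then u else var (if n < k then n else n - 1)
  | lam t, k, u => lam (subst t (k + 1) (lift 0 u))
  | app t v, k, u => app (subst t k u) (subst v k u)

/-- Swap the de Bruijn indices d and d+1 (exchange of two adjacent binders). -/
def swap (d : ℕ) : Term → Term
  | var n => var (if n = d then d + 1 else if n = d + 1 then d else n)
  | lam t => lam (swap (d + 1) t)
  | app t u => app (swap d t) (swap d u)

end Term

/-- The four reduction rules. -/
inductive Rule | beta | delta | gamma | assoc

/-- One-step reduction by a given rule (closed under congruence).
β: (λx.M N) ▷ M[x:=N];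
δ: (λy.λx.M N) ▷ λx.(λy.M N), x ∉ FV(N);
γ: (λx.M N P) ▷ (λx.(M P) N), x ∉ FV(P);
assoc: (M (λx.N P)) ▷ (λx.(M N) P), x ∉ FV(M).
Freshness conditions are realized by lifting. -/
inductive Step : Rule → Term → Term → Prop
  | beta (M N) : Step .beta (.app (.lam M) N) (Term.subst M 0 N)
  | delta (M N) : Step .delta (.app (.lam (.lam M)) N)
      (.lam (.app (.lam (Term.swap 0 M)) (Term.lift 0 N)))
  | gamma (M N P) : Step .gamma (.app (.app (.lam M) N) P)
      (.app (.lam (.app M (Term.lift 0 P))) N)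
  | assoc (M N P) : Step .assoc (.app M (.app (.lam N) P))
      (.app (.lam (.app (Term.lift 0 M) N)) P)
  | appCongL {r t t'} (u) : Step r t t' → Step r (.app t u) (.app t' u)
  | appCongR {r u u'} (t) : Step r u u' → Step r (.app t u) (.app t u')
  | lamCong {r t t'} : Step r t t' → Step r (.lam t) (.lam t')

/-- One-step reduction by the union of the four rules. -/
def StepAll (t t' : Term) : Prop := ∃ r, Step r t t'

/-- Strong normalization for the union of β, δ, γ, assoc. -/
def SN (t : Term) : Prop := Acc (fun a b => StepAll b a) t

/-- Strong normalization for β alone. -/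
def SNbeta (t : Term) : Prop := Acc (fun a b => Step .beta b a) t

mutual
/-- Simple types: atoms and arrows with simple codomain. -/
inductive STy : Type
  | atom : ℕ → STy
  | arrow : Ty → STy → STy
/-- Types of system D: intersections of simple types. -/
inductive Ty : Type
  | simple : STy → Ty
  | inter : STy → Ty → Ty
end

/-- Typing judgment of system D (contexts are lists of types, de Bruijn). -/
inductive Typing : List Ty → Term → Ty → Prop
  | var {Γ n A} : Γ[n]? = some A → Typing Γ (.var n) A
  | app {Γ M N A B} : Typing Γ M (.simple (.arrow A B)) → Typing Γ N A →
      Typing Γ (.app M N) (.simple B)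
  | lam {Γ M A B} : Typing (A :: Γ) M (.simple B) →
      Typing Γ (.lam M) (.simple (.arrow A B))
  | interI {Γ M A B} : Typing Γ M (.simple A) → Typing Γ M B →
      Typing Γ M (.inter A B)
  | interE1 {Γ M A B} : Typing Γ M (.inter A B) → Typing Γ M (.simple A)
  | interE2 {Γ M A B} : Typing Γ M (.inter A B) → Typing Γ M B

/-- A term is typable in system D. -/
def Typable (t : Term) : Prop := ∃ Γ A, Typing Γ t A

/-- (H M₁ ... Mₙ). -/
def appList (H : Term) (Ms : List Term) : Term := Ms.foldl .app H


namespace SRaux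

/-- A simple type occurring as a component of an intersection. -/
def Mem : STy → Ty → Prop
  | S, .simple S' => S = S'
  | S, .inter S' T => S = S' ∨ Mem S T

theorem mem_typing : ∀ (T : Ty) {Γ M S}, Typing Γ M T → Mem S T → Typing Γ M (.simple S)
  | .simple S', _, _, S, h, hm => by
      have : S = S' := hm
      subst this; exact h
  | .inter S' T, Γ, M, S, h, hm => by
      rcases (hm : S = S' ∨ Mem S T) with rfl | hm
      · exact h.interE1
      · exact mem_typing T h.interE2 hm

theorem typing_of_mem : ∀ (T : Ty) {Γ M}, (∀ S, Mem S T → Typing Γ M (.simple S)) → Typing Γ M T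
  | .simple S, _, _, h => h S rfl
  | .inter S T, Γ, M, h =>
      Typing.interI (h S (Or.inl rfl)) (typing_of_mem T fun S' hm => h S' (Or.inr hm))

/-- Join of two intersection types. -/
def joinTy : Ty → Ty → Ty
  | .simple S, U => .inter S U
  | .inter S T, U => .inter S (joinTy T U)

theorem mem_join : ∀ (T U : Ty) (S), Mem S (joinTy T U) ↔ Mem S T ∨ Mem S U
  | .simple S', U, S => Iff.rfl
  | .inter S' T, U, S => by
      show S = S' ∨ Mem S (joinTy T U) ↔ (S = S' ∨ Mem S T) ∨ Mem S U
      rw [mem_join T U S, or_assoc]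

theorem typing_join {Γ M T U} (h1 : Typing Γ M T) (h2 : Typing Γ M U) :
    Typing Γ M (joinTy T U) := by
  refine typing_of_mem _ fun S hS => ?_
  rcases (mem_join T U S).1 hS with h | h
  · exact mem_typing _ h1 h
  · exact mem_typing _ h2 h

/-- Weakening. -/
theorem weaken {G M T} (h : Typing G M T) :
    ∀ Δ₁ Δ₂ (C : Ty), G = Δ₁ ++ Δ₂ → Typing (Δ₁ ++ C :: Δ₂) (M.lift Δ₁.length) T := by
  induction h with
  | @var Γ n A hA =>
    intro Δ₁ Δ₂ C hG; subst hG
    simp only [Term.lift]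
    refine Typing.var ?_
    by_cases hn : n < Δ₁.length
    · rw [if_pos hn, List.getElem?_append_left hn]
      rwa [List.getElem?_append_left hn] at hA
    · rw [if_neg hn, List.getElem?_append_right (by omega)]
      rw [List.getElem?_append_right (by omega)] at hA
      have h2 : n + 1 - Δ₁.length = (n - Δ₁.length) + 1 := by omega
      rw [h2, List.getElem?_cons_succ]
      exact hA
  | app h1 h2 ih1 ih2 =>
    intro Δ₁ Δ₂ C hG
    exact Typing.app (ih1 Δ₁ Δ₂ C hG) (ih2 Δ₁ Δ₂ C hG)
  | @lam Γ M A B h ih =>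
    intro Δ₁ Δ₂ C hG
    refine Typing.lam ?_
    have := ih (A :: Δ₁) Δ₂ C (by simp [hG])
    simpa using this
  | interI h1 h2 ih1 ih2 =>
    intro Δ₁ Δ₂ C hG; exact Typing.interI (ih1 Δ₁ Δ₂ C hG) (ih2 Δ₁ Δ₂ C hG)
  | interE1 h ih => intro Δ₁ Δ₂ C hG; exact (ih Δ₁ Δ₂ C hG).interE1
  | interE2 h ih => intro Δ₁ Δ₂ C hG; exact (ih Δ₁ Δ₂ C hG).interE2

theorem weaken0 {Γ M T} (C : Ty) (h : Typing Γ M T) : Typing (C :: Γ) (M.lift 0) T := by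
  simpa using weaken h [] Γ C rfl

/-- Substitution. -/
theorem subst_lemma {G M T} (h : Typing G M T) :
    ∀ Δ₁ Δ₂ (A : Ty) N, G = Δ₁ ++ A :: Δ₂ → Typing (Δ₁ ++ Δ₂) N A →
      Typing (Δ₁ ++ Δ₂) (M.subst Δ₁.length N) T := by
  induction h with
  | @var Γ n B hA =>
    intro Δ₁ Δ₂ A N hG hN; subst hG
    simp only [Term.subst]
    rcases Nat.lt_trichotomy n Δ₁.length with hn | hn | hn
    · rw [if_neg (by omega), if_pos hn]
      refine Typing.var ?_
      rw [List.getElem?_append_left hn]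
      rwa [List.getElem?_append_left hn] at hA
    · rw [if_pos hn]
      rw [List.getElem?_append_right (by omega)] at hA
      have : n - Δ₁.length = 0 := by omega
      rw [this] at hA
      simp at hA
      subst hA; exact hN
    · rw [if_neg (by omega), if_neg (by omega)]
      refine Typing.var ?_
      rw [List.getElem?_append_right (by omega)]
      rw [List.getElem?_append_right (by omega)] at hA
      have h2 : n - Δ₁.length = (n - Δ₁.length - 1) + 1 := by omega
      rw [h2, List.getElem?_cons_succ] at hA
      have h3 : n - 1 - Δ₁.length = n - Δ₁.length - 1 := by omega
      rw [h3]; exact hA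
  | app h1 h2 ih1 ih2 =>
    intro Δ₁ Δ₂ A N hG hN
    exact Typing.app (ih1 Δ₁ Δ₂ A N hG hN) (ih2 Δ₁ Δ₂ A N hG hN)
  | @lam Γ M B C h ih =>
    intro Δ₁ Δ₂ A N hG hN
    refine Typing.lam ?_
    have hN' : Typing ((B :: Δ₁) ++ Δ₂) (N.lift 0) A := by
      simpa using weaken0 B hN
    have := ih (B :: Δ₁) Δ₂ A (N.lift 0) (by simp [hG]) hN'
    simpa using this
  | interI h1 h2 ih1 ih2 =>
    intro Δ₁ Δ₂ A N hG hN
    exact Typing.interI (ih1 Δ₁ Δ₂ A N hG hN) (ih2 Δ₁ Δ₂ A N hG hN)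
  | interE1 h ih => intro Δ₁ Δ₂ A N hG hN; exact (ih Δ₁ Δ₂ A N hG hN).interE1
  | interE2 h ih => intro Δ₁ Δ₂ A N hG hN; exact (ih Δ₁ Δ₂ A N hG hN).interE2

/-- Exchange of adjacent context entries. -/
theorem swap_lemma {G M T} (h : Typing G M T) :
    ∀ Δ₁ Δ₂ (A B : Ty), G = Δ₁ ++ A :: B :: Δ₂ →
      Typing (Δ₁ ++ B :: A :: Δ₂) (M.swap Δ₁.length) T := by
  induction h with
  | @var Γ n C hA =>
    intro Δ₁ Δ₂ A B hG; subst hG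
    simp only [Term.swap]
    refine Typing.var ?_
    rcases Nat.lt_trichotomy n Δ₁.length with hn | hn | hn
    · rw [if_neg (by omega), if_neg (by omega), List.getElem?_append_left hn]
      rwa [List.getElem?_append_left hn] at hA
    · subst hn
      rw [if_pos rfl, List.getElem?_append_right (by omega)]
      rw [List.getElem?_append_right (by omega)] at hA
      simp at hA ⊢
      exact hA
    · rw [List.getElem?_append_right (by omega)] at hA
      by_cases he : n = Δ₁.length + 1
      · subst he
        rw [if_neg (by omega), if_pos rfl, List.getElem?_append_right (by omega)]
        simp at hA ⊢
        exact hA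
      · rw [if_neg (by omega), if_neg he, List.getElem?_append_right (by omega)]
        have h2 : n - Δ₁.length = (n - Δ₁.length - 2) + 2 := by omega
        rw [h2] at hA ⊢
        simpa using hA
  | app h1 h2 ih1 ih2 =>
    intro Δ₁ Δ₂ A B hG
    exact Typing.app (ih1 Δ₁ Δ₂ A B hG) (ih2 Δ₁ Δ₂ A B hG)
  | @lam Γ M C D h ih =>
    intro Δ₁ Δ₂ A B hG
    refine Typing.lam ?_
    have := ih (C :: Δ₁) Δ₂ A B (by simp [hG])
    simpa using this
  | interI h1 h2 ih1 ih2 =>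
    intro Δ₁ Δ₂ A B hG; exact Typing.interI (ih1 Δ₁ Δ₂ A B hG) (ih2 Δ₁ Δ₂ A B hG)
  | interE1 h ih => intro Δ₁ Δ₂ A B hG; exact (ih Δ₁ Δ₂ A B hG).interE1
  | interE2 h ih => intro Δ₁ Δ₂ A B hG; exact (ih Δ₁ Δ₂ A B hG).interE2

/-- Inversion for abstractions. -/
theorem lam_inv {G t T} (h : Typing G t T) :
    ∀ M, t = .lam M → ∀ S, Mem S T → ∃ A B, S = .arrow A B ∧ Typing (A :: G) M (.simple B) := by
  induction h with
  | var hA => intro M hM; simp at hM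
  | app h1 h2 ih1 ih2 => intro M hM; simp [Term.app] at hM
  | @lam Γ M₀ A B h ih =>
    intro M hM S hS
    have hM' : M₀ = M := by injection hM
    subst hM'
    have : S = STy.arrow A B := hS
    exact ⟨A, B, this, h⟩
  | @interI Γ M₀ A B h1 h2 ih1 ih2 =>
    intro M hM S hS
    rcases (hS : S = A ∨ Mem S B) with rfl | hS
    · exact ih1 M hM S rfl
    · exact ih2 M hM S hS
  | @interE1 Γ M₀ A B h ih =>
    intro M hM S hS
    have : S = A := hS
    subst this
    exact ih M hM S (Or.inl rfl)
  | @interE2 Γ M₀ A B h ih =>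
    intro M hM S hS
    exact ih M hM S (Or.inr hS)

/-- Inversion for applications. -/
theorem app_inv {G t T} (h : Typing G t T) :
    ∀ M N, t = .app M N → ∀ S, Mem S T →
      ∃ A, Typing G M (.simple (.arrow A S)) ∧ Typing G N A := by
  induction h with
  | var hA => intro M N hM; simp at hM
  | @app Γ M₀ N₀ A B h1 h2 ih1 ih2 =>
    intro M N hM S hS
    obtain ⟨rfl, rfl⟩ : M₀ = M ∧ N₀ = N := by
      constructor <;> injection hM
    have : S = B := hS
    subst this
    exact ⟨A, h1, h2⟩
  | lam h ih => intro M N hM; simp at hM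
  | @interI Γ M₀ A B h1 h2 ih1 ih2 =>
    intro M N hM S hS
    rcases (hS : S = A ∨ Mem S B) with rfl | hS
    · exact ih1 M N hM S rfl
    · exact ih2 M N hM S hS
  | @interE1 Γ M₀ A B h ih =>
    intro M N hM S hS
    have : S = A := hS
    subst this
    exact ih M N hM S (Or.inl rfl)
  | @interE2 Γ M₀ A B h ih =>
    intro M N hM S hS
    exact ih M N hM S (Or.inr hS)

/-- Context subsumption: making context entries bigger intersections preserves typing. -/
theorem ctx_sub {G M T} (h : Typing G M T) :
    ∀ (G' : List Ty), (∀ (n : ℕ) (A : Ty), G[n]? = some A → ∃ A' : Ty, G'[n]? = some A' ∧ ∀ S, Mem S A → Mem S A') →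
      Typing G' M T := by
  induction h with
  | var hA =>
    intro G' hs
    obtain ⟨A', hA', hm⟩ := hs _ _ hA
    exact typing_of_mem _ fun S hS => mem_typing _ (Typing.var hA') (hm S hS)
  | app h1 h2 ih1 ih2 => intro G' hs; exact Typing.app (ih1 G' hs) (ih2 G' hs)
  | @lam Γ M A B h ih =>
    intro G' hs
    refine Typing.lam (ih (A :: G') ?_)
    intro n C hC
    match n with
    | 0 => simp at hC; subst hC; exact ⟨A, by simp, fun S hS => hS⟩
    | n + 1 => simpa using hs n C (by simpa using hC)
  | interI h1 h2 ih1 ih2 => intro G' hs; exact Typing.interI (ih1 G' hs) (ih2 G' hs)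
  | interE1 h ih => intro G' hs; exact (ih G' hs).interE1
  | interE2 h ih => intro G' hs; exact (ih G' hs).interE2

theorem ctx_sub_cons {Γ : List Ty} {A A' : Ty} {M T} (h : Typing (A :: Γ) M T)
    (hm : ∀ S, Mem S A → Mem S A') : Typing (A' :: Γ) M T := by
  refine ctx_sub h (A' :: Γ) ?_
  intro n B hB
  match n with
  | 0 => simp at hB; subst hB; exact ⟨A', by simp, hm⟩
  | n + 1 => exact ⟨B, by simpa using hB, fun S hS => hS⟩

theorem assoc_aux : ∀ (A : Ty) {Γ N P},
    (∀ S, Mem S A → Typing Γ (.app (.lam N) P) (.simple S)) →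
    ∃ C, Typing Γ P C ∧ Typing (C :: Γ) N A
  | .simple S, Γ, N, P, h => by
    obtain ⟨B, hlam, hP⟩ := app_inv (h S rfl) (.lam N) P rfl S rfl
    obtain ⟨A', B', heq, hN⟩ := lam_inv hlam N rfl (.arrow B S) rfl
    obtain ⟨rfl, rfl⟩ : B = A' ∧ S = B' := by
      constructor <;> injection heq
    exact ⟨B, hP, hN⟩
  | .inter S T, Γ, N, P, h => by
    obtain ⟨B, hlam, hP⟩ := app_inv (h S (Or.inl rfl)) (.lam N) P rfl S rfl
    obtain ⟨A', B', heq, hN⟩ := lam_inv hlam N rfl (.arrow B S) rfl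
    obtain ⟨rfl, rfl⟩ : B = A' ∧ S = B' := by
      constructor <;> injection heq
    obtain ⟨C', hP', hN'⟩ := assoc_aux T (fun S' hm => h S' (Or.inr hm))
    refine ⟨joinTy B C', typing_join hP hP', Typing.interI ?_ ?_⟩
    · exact ctx_sub_cons hN fun S' hS' => (mem_join B C' S').2 (Or.inl hS')
    · exact ctx_sub_cons hN' fun S' hS' => (mem_join B C' S').2 (Or.inr hS')

theorem main : ∀ {r t t'}, Step r t t' → ∀ Γ A, Typing Γ t A → Typing Γ t' A := by
  intro r t t' hstep
  induction hstep with
  | beta M N =>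
    intro Γ A ht
    refine typing_of_mem _ fun S hS => ?_
    obtain ⟨B, hlam, hN⟩ := app_inv ht (.lam M) N rfl S hS
    obtain ⟨A', B', heq, hM⟩ := lam_inv hlam M rfl (.arrow B S) rfl
    obtain ⟨rfl, rfl⟩ : B = A' ∧ S = B' := by constructor <;> injection heq
    simpa using subst_lemma hM [] Γ B N rfl (by simpa using hN)
  | delta M N =>
    intro Γ A ht
    refine typing_of_mem _ fun S hS => ?_
    obtain ⟨A₁, h1, hN⟩ := app_inv ht _ N rfl S hS
    obtain ⟨A₂, B₂, heq, h2⟩ := lam_inv h1 _ rfl (.arrow A₁ S) rfl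
    obtain ⟨rfl, rfl⟩ : A₁ = A₂ ∧ S = B₂ := by constructor <;> injection heq
    obtain ⟨B, C, rfl, h3⟩ := lam_inv h2 M rfl S rfl
    refine Typing.lam (Typing.app (A := A₁) (Typing.lam ?_) ?_)
    · simpa using swap_lemma h3 [] Γ B A₁ rfl
    · exact weaken0 B hN
  | gamma M N P =>
    intro Γ A ht
    refine typing_of_mem _ fun S hS => ?_
    obtain ⟨A₁, hMN, hP⟩ := app_inv ht _ P rfl S hS
    obtain ⟨A₂, hlam, hN⟩ := app_inv hMN _ N rfl (.arrow A₁ S) rfl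
    obtain ⟨A₃, B₃, heq, hM⟩ := lam_inv hlam M rfl (.arrow A₂ (.arrow A₁ S)) rfl
    obtain ⟨rfl, rfl⟩ : A₂ = A₃ ∧ STy.arrow A₁ S = B₃ := by constructor <;> injection heq
    refine Typing.app (A := A₂) (Typing.lam (Typing.app (A := A₁) hM ?_)) hN
    exact weaken0 A₂ hP
  | assoc M N P =>
    intro Γ A ht
    refine typing_of_mem _ fun S hS => ?_
    obtain ⟨A₁, hM, hNP⟩ := app_inv ht M _ rfl S hS
    obtain ⟨C, hP, hN⟩ := assoc_aux A₁ (fun S' hm => mem_typing _ hNP hm)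
    refine Typing.app (A := C) (Typing.lam (Typing.app (A := A₁) ?_ hN)) hP
    exact weaken0 C hM
  | appCongL u hstep ih =>
    intro Γ A ht
    refine typing_of_mem _ fun S hS => ?_
    obtain ⟨B, h1, h2⟩ := app_inv ht _ u rfl S hS
    exact Typing.app (ih _ _ h1) h2
  | appCongR t hstep ih =>
    intro Γ A ht
    refine typing_of_mem _ fun S hS => ?_
    obtain ⟨B, h1, h2⟩ := app_inv ht t _ rfl S hS
    exact Typing.app h1 (ih _ _ h2)
  | lamCong hstep ih =>
    intro Γ A ht
    refine typing_of_mem _ fun S hS => ?_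
    obtain ⟨B, C, rfl, h⟩ := lam_inv ht _ rfl S hS
    exact Typing.lam (ih _ _ h)

end SRaux

/-- Subject reduction for system D, for all four rules. -/
theorem subject_reduction (Γ : List Ty) (t t' : Term) (A : Ty) (r : Rule)
    (ht : Typing Γ t A) (hstep : Step r t t') : Typing Γ t' A :=
  SRaux.main hstep Γ A ht
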